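/- For every positive integer t, with a = 2/(3t+3+sqrt(9t^2+18t-3)) and b = 1/3 - t*a, the identity 3*lambda(K_{3(t+1)}^{3-}) = binom(3t-1,2)*a^2 + 3*b^2 + 3*(3t-1)*a*b holds. -/

import Mathlib

/-!
Split the vertices into the missing edge `{p, q, r}` and its complement `A`, `#A = m`. For a
weighting with mass `s` on the missing edge the Lagrangian is
`e₃(A) + s e₂(A) + (x_p x_q + x_p x_r + x_q x_r) e₁(A)`; the Maclaurin bounds on `A` and
`3 (x_p x_q + x_p x_r + x_q x_r) ≤ s²` bound it by a cubic in `s` alone. The relation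
`b = a - a²` (equivalently `3a² - (m + 3)a + 1 = 0` with `m a + 3 b = 1`) makes `s = 3b` a
critical point, hence the maximum, of that cubic on `s ≥ 0`, and the blow-up with weight `a` on
`A` and `b` on the missing edge attains it. The identity is then arithmetic modulo the quadratic.
-/

open Finset

/-- The Lagrangian polynomial of a hypergraph `H` on vertex set `V`. -/
def lagPoly {V : Type*} [DecidableEq V] (H : Finset (Finset V)) (x : V → ℝ) : ℝ :=
  ∑ E ∈ H, ∏ i ∈ E, x i

/-- The set of values of the Lagrangian polynomial over the standard simplex;
the Lagrangian of `H` is the greatest element of this set. -/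
def lagValues {V : Type*} [Fintype V] [DecidableEq V] (H : Finset (Finset V)) : Set ℝ :=
  lagPoly H '' stdSimplex ℝ V

/-- `K_{3(t+1)}^{3-}`: the complete 3-graph on `3t+3` vertices minus the single edge
consisting of the last three vertices. -/
def Kminus (t : ℕ) : Finset (Finset (Fin (3 * t + 3))) :=
  (Finset.univ.powersetCard 3).erase (Finset.univ.filter (fun i => 3 * t ≤ i.val))

variable {ι R : Type*}

section Algebra

variable [CommRing R]

def esym (k : ℕ) (s : Finset ι) (x : ι → R) : R :=
  ∑ E ∈ s.powersetCard k, ∏ i ∈ E, x i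

@[simp]
lemma esym_zero (s : Finset ι) (x : ι → R) : esym 0 s x = 1 := by
  simp [esym]

@[simp]
lemma esym_one (s : Finset ι) (x : ι → R) : esym 1 s x = ∑ i ∈ s, x i := by
  simp [esym, powersetCard_one]

@[simp]
lemma esym_succ_empty (k : ℕ) (x : ι → R) : esym (k + 1) (∅ : Finset ι) x = 0 := by
  rw [esym, powersetCard_eq_empty.2 (by simp), sum_empty]

lemma esym_succ_insert [DecidableEq ι] (k : ℕ) {a : ι} {s : Finset ι} (ha : a ∉ s)
    (x : ι → R) :
    esym (k + 1) (insert a s) x = esym (k + 1) s x + x a * esym k s x := by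
  have hdisj : Disjoint (s.powersetCard (k + 1)) ((s.powersetCard k).image (insert a)) := by
    simp only [disjoint_left, mem_powersetCard, mem_image, not_exists, not_and]
    intro E hE F _ hFE
    exact ha (hE.1 (hFE ▸ mem_insert_self a F))
  have hinj : Set.InjOn (insert a) (s.powersetCard k : Set (Finset ι)) := by
    intro E hE F hF hEF
    rw [mem_coe, mem_powersetCard] at hE hF
    rw [← erase_insert (fun h => ha (hE.1 h)), hEF, erase_insert (fun h => ha (hF.1 h))]
  rw [esym, powersetCard_succ_insert ha, sum_union hdisj, sum_image hinj, esym, esym, mul_sum]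
  congr 1
  refine sum_congr rfl fun E hE => prod_insert fun h => ha ((mem_powersetCard.1 hE).1 h)

lemma esym_card (s : Finset ι) (x : ι → R) : esym #s s x = ∏ i ∈ s, x i := by
  rw [esym, powersetCard_self, sum_singleton]

lemma esym_of_forall_eq (k : ℕ) {s : Finset ι} {x : ι → R} {c : R}
    (h : ∀ i ∈ s, x i = c) :
    esym k s x = (#s).choose k * c ^ k := by
  have hE : ∀ E ∈ s.powersetCard k, ∏ i ∈ E, x i = c ^ k := fun E hE => by
    rw [mem_powersetCard] at hE
    rw [prod_congr rfl fun i hi => h i (hE.1 hi), prod_const, hE.2]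
  rw [esym, sum_congr rfl hE, sum_const, card_powersetCard, nsmul_eq_mul]

lemma two_mul_esym_two [DecidableEq ι] (s : Finset ι) (x : ι → R) :
    2 * esym 2 s x = (∑ i ∈ s, x i) ^ 2 - ∑ i ∈ s, x i ^ 2 := by
  induction s using Finset.induction_on with
  | empty => simp
  | insert a s ha ih =>
    rw [esym_succ_insert 1 ha, esym_one, sum_insert ha, sum_insert ha]
    linear_combination ih

lemma six_mul_esym_three [DecidableEq ι] (s : Finset ι) (x : ι → R) :
    6 * esym 3 s x
      = (∑ i ∈ s, x i) ^ 3 - 3 * (∑ i ∈ s, x i) * ∑ i ∈ s, x i ^ 2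
        + 2 * ∑ i ∈ s, x i ^ 3 := by
  induction s using Finset.induction_on with
  | empty => simp
  | insert a s ha ih =>
    rw [esym_succ_insert 2 ha, sum_insert ha, sum_insert ha, sum_insert ha]
    linear_combination ih + 3 * x a * two_mul_esym_two s x

end Algebra

section Inequalities

variable [DecidableEq ι]

lemma esym_two_le (s : Finset ι) (x : ι → ℝ) :
    2 * #s * esym 2 s x ≤ (#s - 1) * (∑ i ∈ s, x i) ^ 2 := by
  linear_combination (#s : ℝ) * two_mul_esym_two s x + sq_sum_le_card_mul_sum_sq (s := s) (f := x)

lemma esym_three_le_of_card_eq_three {s : Finset ι} (hs : #s = 3) {x : ι → ℝ}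
    (hx : ∀ i ∈ s, 0 ≤ x i) : 27 * esym 3 s x ≤ (∑ i ∈ s, x i) ^ 3 := by
  obtain ⟨p, q, r, hpq, hpr, hqr, rfl⟩ := card_eq_three.1 hs
  have hp := hx p (by simp)
  have hq := hx q (by simp)
  have hr := hx r (by simp)
  rw [← hs, esym_card, hs, prod_insert (by simp [hpq, hpr]), prod_pair hqr,
    sum_insert (by simp [hpq, hpr]), sum_pair hqr]
  nlinarith [mul_nonneg hp (sq_nonneg (x q - x r)), mul_nonneg hq (sq_nonneg (x p - x r)),
    mul_nonneg hr (sq_nonneg (x p - x q)),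
    mul_nonneg (add_nonneg (add_nonneg hp hq) hr)
      (add_nonneg (add_nonneg (sq_nonneg (x p - x q)) (sq_nonneg (x q - x r)))
        (sq_nonneg (x p - x r)))]

/-- Tangent line of `y ↦ 3 S y² - 2 y³` at `y = S / m`: the third root of the difference is
`(3/2 - 2/m) S`, which is `≥ S` only for `m ≥ 4`. -/
lemma cubic_tangent_le {m S y : ℝ} (hm : 4 ≤ m) (hy : 0 ≤ y) (hyS : y ≤ S) :
    (3 * m - 2) * S ^ 3 + 6 * (m - 1) * S ^ 2 * (m * y - S)
      ≤ m ^ 3 * (3 * S * y ^ 2 - 2 * y ^ 3) := by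
  have hroot : 0 ≤ (3 * m - 4) * S - 2 * m * y := by nlinarith
  nlinarith [mul_nonneg (sq_nonneg (m * y - S)) hroot]

lemma esym_three_le_of_four_le_card {s : Finset ι} (hs : 4 ≤ #s) {x : ι → ℝ}
    (hx : ∀ i ∈ s, 0 ≤ x i) :
    6 * #s ^ 2 * esym 3 s x ≤ (#s - 1) * (#s - 2) * (∑ i ∈ s, x i) ^ 3 := by
  have hm : (4 : ℝ) ≤ #s := mod_cast hs
  set m : ℝ := (#s : ℝ)
  set S := ∑ i ∈ s, x i
  have htangent := sum_le_sum fun i hi =>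
    cubic_tangent_le hm (hx i hi) (single_le_sum hx hi : x i ≤ S)
  simp only [sum_add_distrib, ← mul_sum, sum_sub_distrib, sum_const, nsmul_eq_mul] at htangent
  have hpower : m * ((3 * m - 2) * S ^ 3)
      ≤ m * (m ^ 2 * (3 * S * ∑ i ∈ s, x i ^ 2 - 2 * ∑ i ∈ s, x i ^ 3)) := by
    linear_combination htangent
  linear_combination m ^ 2 * six_mul_esym_three s x + le_of_mul_le_mul_left hpower (by linarith)

lemma esym_three_le {s : Finset ι} (hs : 3 ≤ #s) {x : ι → ℝ} (hx : ∀ i ∈ s, 0 ≤ x i) :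
    6 * #s ^ 2 * esym 3 s x ≤ (#s - 1) * (#s - 2) * (∑ i ∈ s, x i) ^ 3 := by
  rcases hs.eq_or_lt with hs | hs
  · rw [← hs]
    push_cast
    linear_combination 2 * esym_three_le_of_card_eq_three hs.symm hx
  · exact esym_three_le_of_four_le_card hs hx

end Inequalities

/-- `6 m²` times the bound on the Lagrangian of `K^{3-}` with `m` vertices off the missing edge,
in terms of the weight `s` on that edge. -/
def kminusMajorant (m s : ℝ) : ℝ :=
  (m - 1) * (m - 2) * (1 - s) ^ 3 + 3 * m * (m - 1) * s * (1 - s) ^ 2 + 2 * m ^ 2 * (1 - s) * s ^ 2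

lemma kminusMajorant_le {m a b s : ℝ} (hm : 2 ≤ m) (hab : m * a + 3 * b = 1)
    (hb : b = a - a ^ 2) (hb0 : 0 ≤ b) (hs : 0 ≤ s) :
    kminusMajorant m s ≤ kminusMajorant m (3 * b) := by
  -- `3 b` is a critical point of `kminusMajorant m`, hence a double root of `hfactor`.
  have hcrit : m ^ 2 * b - m * (1 - 3 * b) + (1 - 3 * b) ^ 2 = 0 := by
    linear_combination m ^ 2 * hb + (m - m * a - (1 - 3 * b)) * hab
  have hfactor : kminusMajorant m (3 * b) - kminusMajorant m s
      = 2 * (s - 3 * b) ^ 2 * (s + ((m ^ 2 + 3 * m - 6) / 2 + 6 * b)) := by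
    unfold kminusMajorant
    linear_combination (6 * s - 18 * b) * hcrit
  have hc : 0 ≤ s + ((m ^ 2 + 3 * m - 6) / 2 + 6 * b) := by nlinarith
  nlinarith [mul_nonneg (sq_nonneg (s - 3 * b)) hc]

lemma cast_choose_three {K : Type*} [Field K] [CharZero K] (n : ℕ) :
    (n.choose 3 : K) = n * (n - 1) * (n - 2) / 6 := by
  simp [Nat.cast_choose_eq_descPochhammer_div, descPochhammer_succ_right, Nat.factorial]

def blowupValue (n : ℕ) (a b : ℝ) : ℝ :=
  n.choose 3 * a ^ 3 + 3 * n.choose 2 * a ^ 2 * b + 3 * n * a * b ^ 2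

lemma six_mul_sq_mul_blowupValue {n : ℕ} {a b : ℝ} (hab : n * a + 3 * b = 1) :
    6 * n ^ 2 * blowupValue n a b = kminusMajorant n (3 * b) := by
  rw [blowupValue, kminusMajorant, show 1 - 3 * b = n * a by linarith, cast_choose_three,
    Nat.cast_choose_two]
  ring

section CompleteMinusEdge

variable [Fintype ι] [DecidableEq ι] {p q r : ι}

lemma lagPoly_erase_triple (hpq : p ≠ q) (hpr : p ≠ r) (hqr : q ≠ r) (x : ι → ℝ) :
    lagPoly ((univ.powersetCard 3).erase {p, q, r}) x
      = esym 3 {p, q, r}ᶜ x + (x p + x q + x r) * esym 2 {p, q, r}ᶜ x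
        + (x p * x q + x p * x r + x q * x r) * ∑ i ∈ {p, q, r}ᶜ, x i := by
  set A : Finset ι := {p, q, r}ᶜ
  have hr : r ∉ A := by simp [A]
  have hq : q ∉ insert r A := by simp [A, hqr]
  have hp : p ∉ insert q (insert r A) := by simp [A, hpq, hpr]
  have huniv : (univ : Finset ι) = insert p (insert q (insert r A)) := by
    ext i
    simp only [A, mem_univ, mem_insert, mem_compl, mem_singleton, true_iff]
    tauto
  have hmem : {p, q, r} ∈ (univ : Finset ι).powersetCard 3 :=
    mem_powersetCard.2 ⟨subset_univ _, card_eq_three.2 ⟨p, q, r, hpq, hpr, hqr, rfl⟩⟩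
  rw [lagPoly, sum_erase_eq_sub hmem, ← esym, huniv, prod_insert (by simp [hpq, hpr]),
    prod_pair hqr]
  simp only [esym_succ_insert _ hp, esym_succ_insert _ hq, esym_succ_insert _ hr, esym_zero,
    esym_one, zero_add]
  ring

lemma six_mul_sq_mul_lagPoly_erase_triple_le (hpq : p ≠ q) (hpr : p ≠ r) (hqr : q ≠ r)
    (hA : 3 ≤ #({p, q, r}ᶜ : Finset ι)) {x : ι → ℝ} (hx : x ∈ stdSimplex ℝ ι) :
    6 * #({p, q, r}ᶜ : Finset ι) ^ 2 * lagPoly ((univ.powersetCard 3).erase {p, q, r}) x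
      ≤ kminusMajorant #({p, q, r}ᶜ : Finset ι) (x p + x q + x r) := by
  obtain ⟨hx0, hx1⟩ := hx
  set A : Finset ι := {p, q, r}ᶜ
  set m : ℝ := (#A : ℝ)
  set s := x p + x q + x r
  have hS : ∑ i ∈ A, x i = 1 - s := by
    rw [← hx1, ← sum_compl_add_sum {p, q, r}, sum_insert (by simp [hpq, hpr]), sum_pair hqr]
    ring
  have h3 := esym_three_le hA fun i _ => hx0 i
  have h2 := esym_two_le A x
  have hpair : 3 * (x p * x q + x p * x r + x q * x r) ≤ s ^ 2 := by
    nlinarith [sq_nonneg (x p - x q), sq_nonneg (x p - x r), sq_nonneg (x q - x r)]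
  have hs : 0 ≤ s := add_nonneg (add_nonneg (hx0 p) (hx0 q)) (hx0 r)
  have hS0 : 0 ≤ 1 - s := hS ▸ sum_nonneg fun i _ => hx0 i
  rw [lagPoly_erase_triple hpq hpr hqr, kminusMajorant]
  rw [hS] at h3 h2 ⊢
  linear_combination h3 + (3 * m * s) * h2 + (2 * m ^ 2 * (1 - s)) * hpair

lemma lagPoly_erase_triple_blowup (hpq : p ≠ q) (hpr : p ≠ r) (hqr : q ≠ r) (a b : ℝ) :
    lagPoly ((univ.powersetCard 3).erase {p, q, r})
        (fun i => if i ∈ ({p, q, r} : Finset ι) then b else a)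
      = blowupValue #({p, q, r}ᶜ : Finset ι) a b := by
  have hA : ∀ i ∈ ({p, q, r}ᶜ : Finset ι),
      (if i ∈ ({p, q, r} : Finset ι) then b else a) = a := fun i hi => if_neg (mem_compl.1 hi)
  rw [lagPoly_erase_triple hpq hpr hqr, esym_of_forall_eq 3 hA, esym_of_forall_eq 2 hA,
    sum_congr rfl hA, sum_const, nsmul_eq_mul]
  simp only [mem_insert, mem_singleton, true_or, or_true, if_true, blowupValue]
  ring

lemma blowup_mem_stdSimplex (hpq : p ≠ q) (hpr : p ≠ r) (hqr : q ≠ r) {a b : ℝ}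
    (ha : 0 ≤ a) (hb0 : 0 ≤ b) (hab : #({p, q, r}ᶜ : Finset ι) * a + 3 * b = 1) :
    (fun i => if i ∈ ({p, q, r} : Finset ι) then b else a) ∈ stdSimplex ℝ ι := by
  refine ⟨fun i => ite_nonneg hb0 ha, ?_⟩
  rw [← sum_compl_add_sum {p, q, r}, sum_ite_of_false fun i hi => mem_compl.1 hi,
    sum_ite_of_true fun i hi => hi, sum_const, sum_const,
    card_insert_of_notMem (by simp [hpq, hpr]), card_pair hqr, nsmul_eq_mul, nsmul_eq_mul, ← hab]
  push_cast
  ring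

theorem isGreatest_lagValues_erase_triple (hpq : p ≠ q) (hpr : p ≠ r) (hqr : q ≠ r)
    (hA : 3 ≤ #({p, q, r}ᶜ : Finset ι)) {a b : ℝ} (ha : 0 ≤ a) (hb0 : 0 ≤ b)
    (hab : #({p, q, r}ᶜ : Finset ι) * a + 3 * b = 1) (hb : b = a - a ^ 2) :
    IsGreatest (lagValues ((univ.powersetCard 3).erase {p, q, r}))
      (blowupValue #({p, q, r}ᶜ : Finset ι) a b) := by
  refine ⟨⟨_, blowup_mem_stdSimplex hpq hpr hqr ha hb0 hab,
    lagPoly_erase_triple_blowup hpq hpr hqr a b⟩, ?_⟩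
  rintro _ ⟨x, hx, rfl⟩
  have hm : (3 : ℝ) ≤ #({p, q, r}ᶜ : Finset ι) := mod_cast hA
  have hs : 0 ≤ x p + x q + x r := add_nonneg (add_nonneg (hx.1 p) (hx.1 q)) (hx.1 r)
  have hbound := (six_mul_sq_mul_lagPoly_erase_triple_le hpq hpr hqr hA hx).trans
    (kminusMajorant_le (by linarith) hab hb hb0 hs)
  rw [← six_mul_sq_mul_blowupValue hab] at hbound
  exact le_of_mul_le_mul_left hbound (by positivity)

end CompleteMinusEdge

theorem isGreatest_lagValues_Kminus {t : ℕ} (ht : 1 ≤ t) {a b : ℝ} (ha : 0 ≤ a)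
    (hb0 : 0 ≤ b) (hab : 3 * t * a + 3 * b = 1) (hb : b = a - a ^ 2) :
    IsGreatest (lagValues (Kminus t)) (blowupValue (3 * t) a b) := by
  let p : Fin (3 * t + 3) := ⟨3 * t, by omega⟩
  let q : Fin (3 * t + 3) := ⟨3 * t + 1, by omega⟩
  let r : Fin (3 * t + 3) := ⟨3 * t + 2, by omega⟩
  have hpq : p ≠ q := by simp [p, q, Fin.ext_iff]
  have hpr : p ≠ r := by simp [p, r, Fin.ext_iff]
  have hqr : q ≠ r := by simp [q, r, Fin.ext_iff]
  have hK : Kminus t = (univ.powersetCard 3).erase {p, q, r} := by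
    rw [Kminus]
    congr 1
    ext i
    simp only [mem_filter, mem_univ, true_and, mem_insert, mem_singleton, Fin.ext_iff, p, q, r]
    omega
  have hcard : #({p, q, r}ᶜ : Finset (Fin (3 * t + 3))) = 3 * t := by
    rw [card_compl, card_insert_of_notMem (by simp [hpq, hpr]), card_pair hqr, Fintype.card_fin]
    omega
  have h := isGreatest_lagValues_erase_triple hpq hpr hqr (by omega) ha hb0
    (by rw [hcard]; exact_mod_cast hab) hb
  rwa [← hK, hcard] at h

lemma quadratic_eq_zero_of_eq_two_div_add_sqrt {k a : ℝ} (hk : 12 ≤ k ^ 2) (hk0 : 0 ≤ k)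
    (ha : a = 2 / (k + √(k ^ 2 - 12))) : 3 * a ^ 2 - k * a + 1 = 0 := by
  have hr := Real.sq_sqrt (sub_nonneg.2 hk)
  have hpos : 0 < k + √(k ^ 2 - 12) := by
    have : 0 < k := by nlinarith
    positivity
  rw [ha]
  field_simp
  linear_combination hr

/-- For every positive integer `t`, with `a = 2/(3t + 3 + √(9t² + 18t - 3))` and
`b = 1/3 - t·a`, one has `3·λ(K_{3(t+1)}^{3-}) = C(3t-1, 2)·a² + 3b² + 3(3t-1)·ab`. -/
theorem Kminus_degree_identity (t : ℕ) (ht : 1 ≤ t) (L : ℝ)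
    (hL : IsGreatest (lagValues (Kminus t)) L) :
    let a : ℝ := 2 / (3 * t + 3 + Real.sqrt (9 * (t : ℝ) ^ 2 + 18 * t - 3))
    let b : ℝ := 1 / 3 - t * a
    3 * L = ((3 * t - 1).choose 2 : ℝ) * a ^ 2 + 3 * b ^ 2 + 3 * (3 * (t : ℝ) - 1) * a * b := by
  intro a b
  have ht' : (1 : ℝ) ≤ t := mod_cast ht
  have hquad : 3 * a ^ 2 - (3 * t + 3) * a + 1 = 0 :=
    quadratic_eq_zero_of_eq_two_div_add_sqrt (by nlinarith) (by positivity)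
      (by simp only [a]; ring_nf)
  have ha0 : 0 < a := by positivity
  have ha1 : a ≤ 1 := by
    rw [div_le_one (by positivity)]
    linarith [Real.sqrt_nonneg (9 * (t : ℝ) ^ 2 + 18 * t - 3)]
  have hb : b = a - a ^ 2 := by linear_combination hquad / 3
  have hb0 : 0 ≤ b := hb ▸ by nlinarith
  have hL' := isGreatest_lagValues_Kminus ht ha0.le hb0 (by ring) hb
  rw [hL.unique hL', blowupValue, cast_choose_three, Nat.cast_choose_two, Nat.cast_choose_two,
    Nat.cast_sub (by omega : 1 ≤ 3 * t)]
  push_cast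
  linear_combination (t * a - 1 / 3) * hquad
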